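/- Let (G,D) be a 3-transposition group of symplectic type, meaning that for all a,b ∈ D with a ⊥̸ b and every c ∈ D \ {a,b,a^b}, the element c commutes with at least one of a, b, a^b. Then G acts transitively by conjugation on ordered pairs of non-commuting transpositions: for any (x,y),(u,v) ∈ D × D with x ⊥̸ y and u ⊥̸ v there exists g ∈ G with g⁻¹xg = u and g⁻¹yg = v. -/
import Mathlib


noncomputable section
attribute [local instance] Classical.propDecidable

namespace Paper
/-! ### Basics on 3-transposition groups -/

/-- Conjugation `a^b = b⁻¹ a b`. -/
def conjBy {G : Type*} [Group G] (a b : G) : G := b⁻¹ * a * b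

/-- `(G, D)` is a 3-transposition group: `D` is a generating conjugacy class of
involutions such that the product of any two of its elements has order at most 3. -/
structure Is3TG (G : Type*) [Group G] (D : Set G) : Prop where
  nonempty : D.Nonempty
  conj_mem : ∀ a ∈ D, ∀ g : G, conjBy a g ∈ D
  is_conj : ∀ a ∈ D, ∀ b ∈ D, IsConj a b
  order_two : ∀ a ∈ D, orderOf a = 2
  gen : Subgroup.closure D = ⊤
  order_mul_le : ∀ a ∈ D, ∀ b ∈ D, orderOf (a * b) ≤ 3

/-- A subset `S` is closed under the (abstract) conjugation map `τ`. -/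
def SelfConj {X : Type*} (τ : X → X → X) (S : Set X) : Prop := ∀ a ∈ S, ∀ b ∈ S, τ a b ∈ S

/-- The conjugation map restricted to a self-conjugation-closed subset. -/
def setConj {X : Type*} {τ : X → X → X} {S : Set X} (h : SelfConj τ S) (a b : ↥S) : ↥S :=
  ⟨τ a.1 b.1, h a.1 a.2 b.1 b.2⟩

lemma Is3TG.selfConj {G : Type*} [Group G] {D : Set G} (hD : Is3TG G D) :
    SelfConj conjBy D := fun a ha b _ => hD.conj_mem a ha b

lemma Is3TG.selfConj_inter {G : Type*} [Group G] {D : Set G} (hD : Is3TG G D) (H : Subgroup G) :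
    SelfConj conjBy ((H : Set G) ∩ D) := by
  rintro a ⟨haH, haD⟩ b ⟨hbH, hbD⟩
  exact ⟨H.mul_mem (H.mul_mem (H.inv_mem hbH) haH) hbH, hD.conj_mem a haD b⟩

section Aux
variable {G : Type*} [Group G] {D : Set G}

lemma conjBy_one (a : G) : conjBy a 1 = a := by simp [conjBy]

lemma conjBy_conjBy (a g h : G) : conjBy (conjBy a g) h = conjBy a (g * h) := by
  simp only [conjBy, mul_inv_rev]; group

lemma conjBy_mul (a b g : G) : conjBy (a * b) g = conjBy a g * conjBy b g := by
  simp only [conjBy]; group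

lemma orderOf_conjBy (a g : G) : orderOf (conjBy a g) = orderOf a :=
  ((show SemiconjBy g⁻¹ a (conjBy a g) by
    simp only [SemiconjBy, conjBy]; group).orderOf_eq).symm

lemma conjBy_eq_self_of_commute {a g : G} (h : Commute a g) : conjBy a g = a := by
  rw [conjBy, mul_assoc, h.eq, ← mul_assoc, inv_mul_cancel, one_mul]

lemma Is3TG.mul_self (hD : Is3TG G D) {a : G} (ha : a ∈ D) : a * a = 1 := by
  have h := pow_orderOf_eq_one a
  rw [hD.order_two a ha, sq] at h; exact h

lemma Is3TG.inv_mem_eq (hD : Is3TG G D) {a : G} (ha : a ∈ D) : a⁻¹ = a :=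
  inv_eq_of_mul_eq_one_right (hD.mul_self ha)

lemma orderOf_eq_three' {x : G} (h3 : x ^ 3 = 1) (h1 : x ≠ 1) : orderOf x = 3 := by
  have hd := orderOf_dvd_of_pow_eq_one h3
  rcases (Nat.prime_three.eq_one_or_self_of_dvd _ hd) with h | h
  · exact absurd (orderOf_eq_one_iff.mp h) h1
  · exact h

lemma not_commute_of_three (hD : Is3TG G D) {a b : G} (ha : a ∈ D) (hb : b ∈ D)
    (h : orderOf (a * b) = 3) : ¬ Commute a b := by
  intro hc
  have h2 : (a * b) ^ 2 = 1 := by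
    rw [sq, show a * b * (a * b) = a * (b * a) * b by group, ← hc.eq,
      show a * (a * b) * b = (a * a) * (b * b) by group, hD.mul_self ha, hD.mul_self hb, one_mul]
  have := orderOf_dvd_of_pow_eq_one h2
  rw [h] at this
  norm_num at this

lemma ne_of_three (hD : Is3TG G D) {a b : G} (ha : a ∈ D)
    (h : orderOf (a * b) = 3) : a ≠ b := by
  intro he
  rw [← he, hD.mul_self ha] at h
  simp at h

lemma orderOf_swap {a b : G} (ha : a⁻¹ = a) (hb : b⁻¹ = b) :
    orderOf (b * a) = orderOf (a * b) := by
  rw [show b * a = (a * b)⁻¹ by rw [mul_inv_rev, ha, hb], orderOf_inv]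

/-- K1 : conjugating `a` by `aᵇ` gives `b`. -/
lemma conj_conj_eq {a b : G} (ha : a⁻¹ = a) (hb : b⁻¹ = b) (h3 : (a * b) ^ 3 = 1) :
    conjBy a (conjBy a b) = b := by
  have h3' : a * (b * (a * (b * (a * b)))) = 1 := by
    rw [show a * (b * (a * (b * (a * b)))) = (a * b) ^ 3 by rw [pow_succ, pow_succ, pow_one]; group, h3]
  simp only [conjBy, mul_inv_rev, inv_inv, ha, hb, mul_assoc]
  rw [h3', mul_one]

/-- K2 : `orderOf (u * uᵛ) = 3`. -/
lemma orderOf_mul_conjBy {u v : G} (hv : v⁻¹ = v) (huv : orderOf (u * v) = 3) :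
    orderOf (u * conjBy u v) = 3 := by
  have he : u * conjBy u v = (u * v) ^ 2 := by rw [conjBy, hv, sq]; group
  rw [he]
  apply orderOf_eq_three'
  · rw [← pow_mul, show 2 * 3 = 3 * 2 by norm_num, pow_mul, ← huv, pow_orderOf_eq_one, one_pow]
  · intro h1
    have := orderOf_dvd_of_pow_eq_one h1
    rw [huv] at this; norm_num at this

/-- K3 : `orderOf (uᵛ * v) = 3`. -/
lemma orderOf_conjBy_mul {u v : G} (hu : u⁻¹ = u) (hv : v⁻¹ = v)
    (huv : orderOf (u * v) = 3) : orderOf (conjBy u v * v) = 3 := by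
  rw [show conjBy u v * v = (u * v)⁻¹ * (v * v) by rw [conjBy, mul_inv_rev, hu, hv]; group,
    show (v : G) * v = v * v⁻¹ by rw [hv], mul_inv_cancel, mul_one, orderOf_inv, huv]

/-- K4 : if `y` commutes with `v` then `orderOf (y * uᵛ) = orderOf (y * u) = 3`. -/
lemma orderOf_mul_conjBy_of_commute {u y v : G} (hu : u⁻¹ = u) (hy : y⁻¹ = y) (hv : v⁻¹ = v)
    (hc : Commute y v) (huy : orderOf (u * y) = 3) :
    orderOf (y * conjBy u v) = 3 := by
  have he : y * conjBy u v = conjBy (y * u) v := by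
    simp only [conjBy, hv, ← mul_assoc]
    rw [hc.eq]
  rw [he, orderOf_conjBy, orderOf_swap hu hy, huy]


/-- Step A : move `y` to `v` fixing `u`, when `o(yv)=3`. -/
lemma stepA (hD : Is3TG G D)
    (hsymp : ∀ a ∈ D, ∀ b ∈ D, orderOf (a * b) = 3 →
      ∀ c ∈ D, c ≠ a → c ≠ b → c ≠ conjBy a b →
        (Commute c a ∨ Commute c b ∨ Commute c (conjBy a b)))  {u y v : G} (hu : u ∈ D) (hy : y ∈ D) (hv : v ∈ D)
    (huy : orderOf (u * y) = 3) (huv : orderOf (u * v) = 3) (hyv : orderOf (y * v) = 3) :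
    ∃ g : G, conjBy u g = u ∧ conjBy y g = v := by
  have hyw : conjBy y (conjBy y v) = v :=
    conj_conj_eq (hD.inv_mem_eq hy) (hD.inv_mem_eq hv)
      (by rw [← hyv]; exact pow_orderOf_eq_one _)
  by_cases huw : u = conjBy y v
  · refine ⟨u, ?_, by rw [huw]; exact hyw⟩
    simp [conjBy]
  · rcases hsymp y hy v hv hyv u hu (ne_of_three hD hu huy) (ne_of_three hD hu huv) huw
      with hc | hc | hc
    · exact absurd hc.symm (not_commute_of_three hD hy hu (orderOf_swap (hD.inv_mem_eq hu) (hD.inv_mem_eq hy) ▸ huy))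
    · exact absurd hc (not_commute_of_three hD hu hv huv)
    · exact ⟨conjBy y v, conjBy_eq_self_of_commute hc, hyw⟩

/-- Step C : move `y` to `v` fixing `u`, when `y` and `v` commute. -/
lemma stepC (hD : Is3TG G D)
    (hsymp : ∀ a ∈ D, ∀ b ∈ D, orderOf (a * b) = 3 →
      ∀ c ∈ D, c ≠ a → c ≠ b → c ≠ conjBy a b →
        (Commute c a ∨ Commute c b ∨ Commute c (conjBy a b)))  {u y v : G} (hu : u ∈ D) (hy : y ∈ D) (hv : v ∈ D)
    (huy : orderOf (u * y) = 3) (huv : orderOf (u * v) = 3) (hc : Commute y v) :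
    ∃ g : G, conjBy u g = u ∧ conjBy y g = v := by
  have hdD : conjBy u v ∈ D := hD.conj_mem u hu v
  have hud : orderOf (u * conjBy u v) = 3 := orderOf_mul_conjBy (hD.inv_mem_eq hv) huv
  have hdv : orderOf (conjBy u v * v) = 3 :=
    orderOf_conjBy_mul (hD.inv_mem_eq hu) (hD.inv_mem_eq hv) huv
  have hyd : orderOf (y * conjBy u v) = 3 :=
    orderOf_mul_conjBy_of_commute (hD.inv_mem_eq hu) (hD.inv_mem_eq hy) (hD.inv_mem_eq hv) hc huy
  obtain ⟨g₁, h1u, h1y⟩ := stepA hD hsymp hu hy hdD huy hud hyd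
  obtain ⟨g₂, h2u, h2d⟩ := stepA hD hsymp hu hdD hv hud huv hdv
  exact ⟨g₁ * g₂, by rw [← conjBy_conjBy, h1u, h2u], by rw [← conjBy_conjBy, h1y, h2d]⟩

/-- Step B : stabilizer transitivity. -/
lemma stepB (hD : Is3TG G D)
    (hsymp : ∀ a ∈ D, ∀ b ∈ D, orderOf (a * b) = 3 →
      ∀ c ∈ D, c ≠ a → c ≠ b → c ≠ conjBy a b →
        (Commute c a ∨ Commute c b ∨ Commute c (conjBy a b)))  {u y v : G} (hu : u ∈ D) (hy : y ∈ D) (hv : v ∈ D)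
    (huy : orderOf (u * y) = 3) (huv : orderOf (u * v) = 3) :
    ∃ g : G, conjBy u g = u ∧ conjBy y g = v := by
  by_cases h1 : y = v
  · exact ⟨1, conjBy_one u, by rw [conjBy_one, h1]⟩
  by_cases h2 : orderOf (y * v) = 3
  · exact stepA hD hsymp hu hy hv huy huv h2
  by_cases h3 : Commute y v
  · exact stepC hD hsymp hu hy hv huy huv h3
  · -- hard case: use the symplectic hypothesis to find `e = uʸ` commuting with `v`
    have heD : conjBy u y ∈ D := hD.conj_mem u hu y
    have hue : orderOf (u * conjBy u y) = 3 := orderOf_mul_conjBy (hD.inv_mem_eq hy) huy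
    have hye : orderOf (y * conjBy u y) = 3 := by
      rw [show y * conjBy u y = u * y by rw [conjBy]; group, huy]
    have hve : v ≠ conjBy u y := by
      intro hh
      rw [hh] at h2
      exact h2 hye
    rcases hsymp u hu y hy huy v hv (Ne.symm (ne_of_three hD hu huv))
        (fun hh => h1 hh.symm) hve with hc | hc | hc
    · exact absurd hc.symm (not_commute_of_three hD hu hv huv)
    · exact absurd hc.symm h3
    · obtain ⟨g₁, h1u, h1y⟩ := stepA hD hsymp hu hy heD huy hue hye
      obtain ⟨g₂, h2u, h2e⟩ := stepC hD hsymp hu heD hv hue huv hc.symm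
      exact ⟨g₁ * g₂, by rw [← conjBy_conjBy, h1u, h2u], by rw [← conjBy_conjBy, h1y, h2e]⟩

end Aux

/-- A 3-transposition group of symplectic type acts transitively (by
conjugation) on ordered pairs of non-commuting transpositions. -/
theorem statement0 {G : Type*} [Group G] {D : Set G} (hD : Is3TG G D)
    (hsymp : ∀ a ∈ D, ∀ b ∈ D, orderOf (a * b) = 3 →
      ∀ c ∈ D, c ≠ a → c ≠ b → c ≠ conjBy a b →
        (Commute c a ∨ Commute c b ∨ Commute c (conjBy a b))) :
    ∀ x ∈ D, ∀ y ∈ D, orderOf (x * y) = 3 → ∀ u ∈ D, ∀ v ∈ D, orderOf (u * v) = 3 →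
      ∃ g : G, conjBy x g = u ∧ conjBy y g = v := by
  intro x hx y hy hxy u hu v hv huv
  obtain ⟨c, hc⟩ := isConj_iff.mp (hD.is_conj x hx u hu)
  have hxc : conjBy x c⁻¹ = u := by rw [conjBy, inv_inv, hc]
  have hyD : conjBy y c⁻¹ ∈ D := hD.conj_mem y hy c⁻¹
  have huy' : orderOf (u * conjBy y c⁻¹) = 3 := by
    rw [← hxc, ← conjBy_mul, orderOf_conjBy, hxy]
  obtain ⟨g, hgu, hgy⟩ := stepB hD hsymp hu hyD hv huy' huv
  refine ⟨c⁻¹ * g, ?_, ?_⟩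
  · rw [← conjBy_conjBy, hxc, hgu]
  · rw [← conjBy_conjBy]; exact hgy


end Paper
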